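/- The logic of the Kripke 2-frame 𝕋_{2,2+2} equals L; that is, a bimodal formula is valid in 𝕋_{2,2+2} if and only if it belongs to L = S4.1 ∗ S4 + ◇₁□₂(◇₁p → □₁p). -/

import Mathlib

/-!
Soundness: `R₁′` and `R₂′` are preorders, and every point `R₁′`-sees a point of the upper
layer `T₂,₂ × T₂`, on which `R₁′` is the identity and which is closed under `R₂′`. This
validates the McKinsey axiom for `□₁` and the axiom `◇₁□₂(◇₁p → □₁p)`.

Completeness: a formula outside `L` is false at some maximal `L`-consistent set `Γ`; we label
the points of `𝕋₂,₂₊₂` by maximal consistent sets so that the labelling is forth-and-back for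
the canonical relations, and the truth lemma carries the refutation over. The root layer
unravels the canonical model from `Γ`: `a₁` (`b₁`) moves to a `□₁`- (`□₂`-) successor
witnessing the `n`-th `◇₁`- (`◇₂`-) formula, `n` being the number of `a₂` (`b₂`) just before
it, and `a₂`, `b₂` stay put, so every diamond gets witnessed along some word. Above `⟨a, root⟩`
we pass to a `□₁`-successor containing every `□₂(◇₁B → □₁B)`, which exists by the axiom
`◇₁□₂(◇₁p → □₁p)` combined with McKinsey, and unravel `□₂` along `T₂` in the same way. These
formulas persist along `□₂`, so `◇₁B → B` holds at every label there, matching the reflexive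
single-point `R₁′`-cones of the upper layer.
-/

/-- Unimodal formulas. -/
inductive MForm : Type
  | var : ℕ → MForm
  | bot : MForm
  | imp : MForm → MForm → MForm
  | box : MForm → MForm

namespace MForm
def neg (A : MForm) : MForm := A.imp .bot
def dia (A : MForm) : MForm := (MForm.box A.neg).neg
def subst (σ : ℕ → MForm) : MForm → MForm
  | var n => σ n
  | bot => bot
  | imp A B => (subst σ A).imp (subst σ B)
  | box A => MForm.box (subst σ A)
end MForm

/-- Bimodal formulas (`box 0` is □₁ and `box 1` is □₂). -/
inductive BForm : Type
  | var : ℕ → BForm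
  | bot : BForm
  | imp : BForm → BForm → BForm
  | box : Fin 2 → BForm → BForm

namespace BForm
def neg (A : BForm) : BForm := A.imp .bot
def dia (i : Fin 2) (A : BForm) : BForm := (BForm.box i A.neg).neg
def subst (σ : ℕ → BForm) : BForm → BForm
  | var n => σ n
  | bot => bot
  | imp A B => (subst σ A).imp (subst σ B)
  | box i A => BForm.box i (subst σ A)
end BForm

/-- Translation of a unimodal formula into the bimodal language,
reading □ as □ᵢ. -/
def MForm.toB (i : Fin 2) : MForm → BForm
  | .var n => .var n
  | .bot => .bot
  | .imp A B => (MForm.toB i A).imp (MForm.toB i B)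
  | .box A => BForm.box i (MForm.toB i A)

/-- Provability in the smallest normal unimodal logic containing the axioms `Ax`:
classical tautologies (via a Hilbert axiomatization), the normality axiom,
modus ponens, necessitation and uniform substitution. -/
inductive MProv (Ax : Set MForm) : MForm → Prop
  | axm {A : MForm} : A ∈ Ax → MProv Ax A
  | pl1 {A B : MForm} : MProv Ax (A.imp (B.imp A))
  | pl2 {A B C : MForm} : MProv Ax ((A.imp (B.imp C)).imp ((A.imp B).imp (A.imp C)))
  | pl3 {A : MForm} : MProv Ax ((A.neg.neg).imp A)
  | kax {A B : MForm} : MProv Ax ((MForm.box (A.imp B)).imp ((MForm.box A).imp (MForm.box B)))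
  | mp {A B : MForm} : MProv Ax (A.imp B) → MProv Ax A → MProv Ax B
  | nec {A : MForm} : MProv Ax A → MProv Ax (MForm.box A)
  | subst {A : MForm} (σ : ℕ → MForm) : MProv Ax A → MProv Ax (A.subst σ)

/-- Provability in the smallest normal bimodal logic containing the axioms `Ax`. -/
inductive BProv (Ax : Set BForm) : BForm → Prop
  | axm {A : BForm} : A ∈ Ax → BProv Ax A
  | pl1 {A B : BForm} : BProv Ax (A.imp (B.imp A))
  | pl2 {A B C : BForm} : BProv Ax ((A.imp (B.imp C)).imp ((A.imp B).imp (A.imp C)))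
  | pl3 {A : BForm} : BProv Ax ((A.neg.neg).imp A)
  | kax (i : Fin 2) {A B : BForm} :
      BProv Ax ((BForm.box i (A.imp B)).imp ((BForm.box i A).imp (BForm.box i B)))
  | mp {A B : BForm} : BProv Ax (A.imp B) → BProv Ax A → BProv Ax B
  | nec (i : Fin 2) {A : BForm} : BProv Ax A → BProv Ax (BForm.box i A)
  | subst {A : BForm} (σ : ℕ → BForm) : BProv Ax A → BProv Ax (A.subst σ)

/-- The propositional letter p. -/
def pM : MForm := .var 0

/-- Axioms of S4 : □p→p and □p→□□p. -/
def S4Ax : Set MForm := {(MForm.box pM).imp pM, (MForm.box pM).imp (MForm.box (MForm.box pM))}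

/-- The McKinsey axiom □◇p→◇□p. -/
def McKM : MForm := (MForm.box pM.dia).imp (MForm.box pM).dia

/-- The logic S4. -/
def S4L : Set MForm := {A | MProv S4Ax A}

/-- The logic S4.1 = S4 + McKinsey. -/
def S41L : Set MForm := {A | MProv (S4Ax ∪ {McKM}) A}

/-- Axioms of the fusion S4.1 ∗ S4 : all theorems of S4.1 read with □₁ together
with all theorems of S4 read with □₂. -/
def FusionAx : Set BForm := (MForm.toB 0 '' S41L) ∪ (MForm.toB 1 '' S4L)

/-- The fusion S4.1 ∗ S4 (as a normal bimodal logic). -/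
def FusionL : Set BForm := {A | BProv FusionAx A}

def pB : BForm := .var 0

/-- The formula ◇₁□₂(◇₁p → □₁p). -/
def MKB : BForm := BForm.dia 0 (BForm.box 1 ((BForm.dia 0 pB).imp (BForm.box 0 pB)))

/-- The logic L = S4.1 ∗ S4 + ◇₁□₂(◇₁p → □₁p). -/
def LL : Set BForm := {A | BProv (FusionAx ∪ {MKB}) A}

/-- Truth of a bimodal formula at a point of a Kripke 2-frame `(W, R 0, R 1)`
under valuation `V`. -/
def BSat {W : Type} (R : Fin 2 → W → W → Prop) (V : ℕ → W → Prop) : W → BForm → Prop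
  | x, .var n => V n x
  | _, .bot => False
  | x, .imp A B => BSat R V x A → BSat R V x B
  | x, .box i A => ∀ y, R i x y → BSat R V y A

/-- Frame validity for bimodal formulas. -/
def BValid {W : Type} (R : Fin 2 → W → W → Prop) (A : BForm) : Prop :=
  ∀ (V : ℕ → W → Prop) (x : W), BSat R V x A

/-- Truth of a unimodal formula at a point of a Kripke frame. -/
def MKSat {W : Type} (R : W → W → Prop) (V : ℕ → W → Prop) : W → MForm → Prop
  | x, .var n => V n x
  | _, .bot => False
  | x, .imp A B => MKSat R V x A → MKSat R V x B
  | x, .box A => ∀ y, R x y → MKSat R V y A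

/-- Frame validity for unimodal formulas. -/
def MKValid {W : Type} (R : W → W → Prop) (A : MForm) : Prop :=
  ∀ (V : ℕ → W → Prop) (x : W), MKSat R V x A

/-- Topological truth of a unimodal formula: □A holds at `x` iff some open
neighbourhood of `x` satisfies `A` everywhere. -/
def MTSat {X : Type} (t : TopologicalSpace X) (V : ℕ → X → Prop) : X → MForm → Prop
  | x, .var n => V n x
  | _, .bot => False
  | x, .imp A B => MTSat t V x A → MTSat t V x B
  | x, .box A => ∃ U : Set X, t.IsOpen U ∧ x ∈ U ∧ ∀ y ∈ U, MTSat t V y A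

/-- Topological validity for unimodal formulas. -/
def MTValid {X : Type} (t : TopologicalSpace X) (A : MForm) : Prop :=
  ∀ (V : ℕ → X → Prop) (x : X), MTSat t V x A

/-- Bitopological truth of a bimodal formula: □ᵢ is interpreted via the
topology `t i`. -/
def BTSat {X : Type} (t : Fin 2 → TopologicalSpace X) (V : ℕ → X → Prop) : X → BForm → Prop
  | x, .var n => V n x
  | _, .bot => False
  | x, .imp A B => BTSat t V x A → BTSat t V x B
  | x, .box i A => ∃ U : Set X, (t i).IsOpen U ∧ x ∈ U ∧ ∀ y ∈ U, BTSat t V y A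

/-- Bitopological validity for bimodal formulas. -/
def BTValid {X : Type} (t : Fin 2 → TopologicalSpace X) (A : BForm) : Prop :=
  ∀ (V : ℕ → X → Prop) (x : X), BTSat t V x A

/-- The horizontal topology on `X × Y`: generated by the base
`{U × {y} : U open in X, y ∈ Y}`. -/
def horiz {X Y : Type} (t : TopologicalSpace X) : TopologicalSpace (X × Y) :=
  TopologicalSpace.generateFrom
    {S | ∃ (U : Set X) (y : Y), t.IsOpen U ∧ S = U ×ˢ ({y} : Set Y)}

/-- The vertical topology on `X × Y`: generated by the base
`{{x} × U : x ∈ X, U open in Y}`. -/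
def vert {X Y : Type} (t : TopologicalSpace Y) : TopologicalSpace (X × Y) :=
  TopologicalSpace.generateFrom
    {S | ∃ (x : X) (U : Set Y), t.IsOpen U ∧ S = ({x} : Set X) ×ˢ U}

/-- The topological product `L₁ ×ₜ L₂` of two unimodal logics: the set of all
bimodal formulas valid in every bitopological product `𝔛₁ × 𝔛₂` of (nonempty)
topological spaces with `𝔛₁ ⊨ L₁` and `𝔛₂ ⊨ L₂`. -/
def TopProdLogic (L1 L2 : Set MForm) : Set BForm :=
  {A | ∀ (X Y : Type) (t1 : TopologicalSpace X) (t2 : TopologicalSpace Y),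
      Nonempty X → Nonempty Y →
      (∀ B ∈ L1, MTValid t1 B) → (∀ B ∈ L2, MTValid t2 B) →
      BTValid ![horiz t1, vert t2] A}

/-- The Alexandrov topology of a (reflexive transitive) relation `R`:
the topology with base `{R(x) : x ∈ W}`. -/
def alexandrov {W : Type} (R : W → W → Prop) : TopologicalSpace W :=
  TopologicalSpace.generateFrom {S | ∃ x, S = {t | R x t}}

/-- A space is weakly scattered if every nonempty open set contains an
isolated point. -/
def WeaklyScattered {X : Type} (t : TopologicalSpace X) : Prop :=
  ∀ U : Set X, t.IsOpen U → U.Nonempty → ∃ x ∈ U, t.IsOpen ({x} : Set X)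

/-- p-morphism between Kripke 1-frames. -/
def IsPMorphism {W U : Type} (R : W → W → Prop) (S : U → U → Prop) (f : W → U) : Prop :=
  Function.Surjective f ∧ (∀ x y, R x y → S (f x) (f y)) ∧
    (∀ x u, S (f x) u → ∃ y, R x y ∧ f y = u)

/-- p-morphism between Kripke 2-frames. -/
def IsPMorphism2 {W U : Type} (R1 R2 : W → W → Prop) (S1 S2 : U → U → Prop)
    (f : W → U) : Prop :=
  Function.Surjective f ∧
    (∀ x y, R1 x y → S1 (f x) (f y)) ∧ (∀ x u, S1 (f x) u → ∃ y, R1 x y ∧ f y = u) ∧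
    (∀ x y, R2 x y → S2 (f x) (f y)) ∧ (∀ x u, S2 (f x) u → ∃ y, R2 x y ∧ f y = u)

/-- The four-letter alphabet {a₁,a₂,b₁,b₂}: `(false, i)` is the a-letter `aᵢ₊₁`
and `(true, i)` is the b-letter `bᵢ₊₁`. -/
abbrev Letter : Type := Bool × Fin 2

/-- `T₂,₂ = {a₁,a₂,b₁,b₂}*`. -/
abbrev T22 : Type := List Letter

/-- `T₂ = {1,2}*`. -/
abbrev T2W : Type := List (Fin 2)

/-- First relation of `𝕋₂,₂`: append a word over the a-letters. -/
def R1T (w w' : T22) : Prop := ∃ c : T22, (∀ l ∈ c, l.1 = false) ∧ w' = w ++ c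

/-- Second relation of `𝕋₂,₂`: append a word over the b-letters. -/
def R2T (w w' : T22) : Prop := ∃ d : T22, (∀ l ∈ d, l.1 = true) ∧ w' = w ++ d

/-- The carrier of `𝕋₂,₂₊₂` : `⟨a, root⟩` is encoded as `(a, none)` and
`⟨a, b⟩` with `b ∈ T₂` as `(a, some b)`. -/
abbrev W222 : Type := T22 × Option T2W

/-- Generators of `R₁′`. -/
def R1'gen : W222 → W222 → Prop := fun x y =>
  (∃ a a', R1T a a' ∧ x = (a, none) ∧ y = (a', none)) ∨
  (∃ a, x = (a, none) ∧ y = (a, some ([] : T2W)))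

/-- `R₁′`: smallest reflexive transitive relation containing the generators. -/
def R1' : W222 → W222 → Prop := Relation.ReflTransGen R1'gen

/-- Generators of `R₂′`. -/
def R2'gen : W222 → W222 → Prop := fun x y =>
  (∃ a a', R2T a a' ∧ x = (a, none) ∧ y = (a', none)) ∨
  (∃ a b b', b <+: b' ∧ x = (a, some b) ∧ y = (a, some b'))

/-- `R₂′`: smallest reflexive transitive relation containing the generators. -/
def R2' : W222 → W222 → Prop := Relation.ReflTransGen R2'gen

/-- Infinite sequences over {0,1,2}: `none` encodes 0 and `some i` encodes
`i+1 ∈ {1,2}`. -/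
abbrev Seq3 : Type := ℕ → Option (Fin 2)

/-- `W_ω`: pseudo-infinite paths, i.e. sequences with finitely many nonzero
entries. -/
def Wom : Type := {s : Seq3 // {k | s k ≠ none}.Finite}

/-- `st(s)`: the least `N` such that all entries from `N` on are zero. -/
noncomputable def stN {γ : Type} (s : ℕ → Option γ) : ℕ :=
  sInf {N | ∀ k, N ≤ k → s k = none}

/-- The first `k` entries of a sequence, as a finite word. -/
def takeSeq {γ : Type} (s : ℕ → Option γ) (k : ℕ) : List (Option γ) :=
  List.ofFn (fun i : Fin k => s i.1)

/-- `f_F`: delete all zeros from a finite word. -/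
def fF {γ : Type} (l : List (Option γ)) : List γ := l.filterMap id

/-- `f_ω`: delete the zeros from a pseudo-infinite path, producing a finite word. -/
noncomputable def squash {γ : Type} (s : ℕ → Option γ) : List γ := fF (takeSeq s (stN s))

/-- The basic set `U_k(α) = {β ∈ W_ω : α↾k = β↾k and f_F(α↾k) ⊑ f_ω(β)}`. -/
def Uset (α : Wom) (k : ℕ) : Set Wom :=
  {β | takeSeq β.1 k = takeSeq α.1 k ∧ fF (takeSeq α.1 k) <+: squash β.1}

/-- The topology `T_ω` on `W_ω` generated by the base `{U_k(α) : k > 0}`;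
`𝒴 = (W_ω, T_ω)`. -/
def Tom : TopologicalSpace Wom :=
  TopologicalSpace.generateFrom {S | ∃ α k, 0 < k ∧ S = Uset α k}

/-- The basic sets of the space `𝔛`:
`U′_k(α,0) = (U_k(α) × {0}) ∪ (U_k(α) × {n ≥ k})` and `U′_k(α,n) = {⟨α,n⟩}`
for `n ≥ 1`. -/
def U'set (α : Wom) (k n : ℕ) : Set (Wom × ℕ) :=
  if n = 0 then (Uset α k ×ˢ ({0} : Set ℕ)) ∪ (Uset α k ×ˢ {m : ℕ | k ≤ m})
  else {(α, n)}

/-- The topology of the space `𝔛 = (W_ω × ℕ, T)`. -/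
def TX : TopologicalSpace (Wom × ℕ) :=
  TopologicalSpace.generateFrom {S | ∃ α k n, S = U'set α k n}

/-- Interleaving of two paths: the sequence `a_{x₁} b_{y₁} a_{x₂} b_{y₂} …`
(with `a₀ = b₀ = 0`). -/
def interleave (α β : Seq3) : ℕ → Option Letter := fun n =>
  if n % 2 = 0 then (α (n / 2)).map (fun v => ((false, v) : Letter))
  else (β (n / 2)).map (fun v => ((true, v) : Letter))

/-- The map `g : W_ω × W_ω → T₂,₂` obtained by interleaving and deleting zeros. -/
noncomputable def gmap (α β : Seq3) : T22 := squash (interleave α β)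

/-- `g` as a map on pairs. -/
noncomputable def gPair : Wom × Wom → T22 := fun q => gmap q.1.1 q.2.1

/-- `s↾n · 0^ω`. -/
def truncSeq (s : Seq3) (n : ℕ) : Seq3 := fun k => if k < n then s k else none

/-- The tail `γ` of `s = s↾n · γ`. -/
def shiftSeq (s : Seq3) (n : ℕ) : Seq3 := fun k => s (n + k)

/-- The map `f : 𝔛 × 𝒴 → 𝕋₂,₂₊₂` :
`f(⟨α,0⟩,β) = ⟨g(α,β), root⟩` and for `n ≥ 1`,
`f(⟨α,n⟩,β) = ⟨g(α↾n·0^ω, β↾n·0^ω), f_ω(γ)⟩` where `β = β↾n·γ`. -/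
noncomputable def fXY : (Wom × ℕ) × Wom → W222 := fun q =>
  if q.1.2 = 0 then (gmap q.1.1.1 q.2.1, none)
  else (gmap (truncSeq q.1.1.1 q.1.2) (truncSeq q.2.1 q.1.2),
        some (squash (shiftSeq q.2.1 q.1.2)))

/-- An effective encoding of bimodal formulas by natural numbers. -/
def encodeB : BForm → ℕ
  | .var n => Nat.pair 0 n
  | .bot => Nat.pair 1 0
  | .imp A B => Nat.pair 2 (Nat.pair (encodeB A) (encodeB B))
  | .box i A => Nat.pair 3 (Nat.pair i.1 (encodeB A))

instance : Nonempty BForm := ⟨.bot⟩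

namespace BForm

def conj (A B : BForm) : BForm := (A.imp B.neg).neg

def top : BForm := bot.imp bot

def bigConj : List BForm → BForm
  | [] => top
  | A :: t => A.conj (bigConj t)

def impList : List BForm → BForm → BForm
  | [], C => C
  | A :: t, C => A.imp (impList t C)

end BForm

open BForm

namespace BProv

variable {Ax : Set BForm}

local notation "⊩" A => BProv Ax A

theorem imp_refl (A : BForm) : ⊩ A.imp A :=
  (pl2 (B := A.imp A)).mp pl1 |>.mp pl1

theorem weaken {A B : BForm} (h : ⊩ B) : ⊩ A.imp B := pl1.mp h

theorem imp_mp {A B C : BForm} (h₁ : ⊩ A.imp (B.imp C)) (h₂ : ⊩ A.imp B) : ⊩ A.imp C :=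
  (pl2.mp h₁).mp h₂

theorem imp_trans {A B C : BForm} (h₁ : ⊩ A.imp B) (h₂ : ⊩ B.imp C) : ⊩ A.imp C :=
  imp_mp (weaken h₂) h₁

theorem imp_comp (A B C : BForm) : ⊩ (B.imp C).imp ((A.imp B).imp (A.imp C)) :=
  imp_trans (pl1 (A := B.imp C) (B := A)) pl2

theorem swap {A B C : BForm} (h : ⊩ A.imp (B.imp C)) : ⊩ B.imp (A.imp C) :=
  imp_trans pl1 (pl2.mp h)

theorem swap_thm (A B C : BForm) : ⊩ (A.imp (B.imp C)).imp (B.imp (A.imp C)) :=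
  imp_mp (imp_trans pl2 (imp_comp B (A.imp B) (A.imp C))) (weaken pl1)

theorem contract (A C : BForm) : ⊩ (A.imp (A.imp C)).imp (A.imp C) :=
  (swap (pl2 (A := A) (B := A) (C := C))).mp (imp_refl A)

theorem imp_trans_concl {X Y Z W : BForm} (h : ⊩ X.imp (Y.imp Z)) (g : ⊩ Z.imp W) :
    ⊩ X.imp (Y.imp W) :=
  imp_trans h ((imp_comp Y Z W).mp g)

theorem imp_trans_prem {X Y Z W : BForm} (h : ⊩ X.imp (Y.imp Z)) (g : ⊩ W.imp Y) :
    ⊩ X.imp (W.imp Z) :=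
  imp_trans h ((swap (imp_comp W Y Z)).mp g)

theorem not_not_intro (A : BForm) : ⊩ A.imp A.neg.neg := swap (imp_refl A.neg)

theorem bot_elim (A : BForm) : ⊩ bot.imp A := imp_trans pl1 pl3

theorem neg_imp (A B : BForm) : ⊩ A.neg.imp (A.imp B) := pl2.mp (weaken (bot_elim B))

theorem contrapose (A B : BForm) : ⊩ (A.imp B).imp (B.neg.imp A.neg) :=
  swap (imp_comp A B bot)

theorem of_contrapose (A B : BForm) : ⊩ (B.neg.imp A.neg).imp (A.imp B) :=
  imp_trans_concl (imp_trans_prem (contrapose _ _) (not_not_intro A)) pl3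

theorem conj_intro (A B : BForm) : ⊩ A.imp (B.imp (A.conj B)) :=
  imp_trans (swap (imp_refl (A.imp B.neg))) (swap_thm (A.imp B.neg) B bot)

theorem conj_left (A B : BForm) : ⊩ (A.conj B).imp A :=
  (of_contrapose _ A).mp (imp_trans (neg_imp A B.neg) (not_not_intro _))

theorem conj_right (A B : BForm) : ⊩ (A.conj B).imp B :=
  (of_contrapose _ B).mp (imp_trans pl1 (not_not_intro (A.imp B.neg)))

theorem conj_comm (A B : BForm) : ⊩ (A.conj B).imp (B.conj A) :=
  imp_mp (imp_trans (conj_right A B) (conj_intro B A)) (conj_left A B)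

theorem impList_intro (l : List BForm) (C : BForm) : ⊩ C.imp (impList l C) := by
  induction l with
  | nil => exact imp_refl C
  | cons A t ih => exact imp_trans ih pl1

theorem impList_mp (l : List BForm) (A B : BForm) :
    ⊩ (impList l (A.imp B)).imp ((impList l A).imp (impList l B)) := by
  induction l with
  | nil => exact imp_refl _
  | cons X t ih => exact imp_trans ((imp_comp X _ _).mp ih) pl2

theorem impList_append_left (l l' : List BForm) (C : BForm) :
    ⊩ (impList l C).imp (impList (l ++ l') C) := by
  induction l with
  | nil => exact impList_intro l' C
  | cons A t ih => exact (imp_comp A _ _).mp ih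

theorem impList_append_right (l l' : List BForm) (C : BForm) :
    ⊩ (impList l' C).imp (impList (l ++ l') C) := by
  induction l with
  | nil => exact imp_refl _
  | cons A t ih => exact imp_trans ih pl1

theorem impList_push (l : List BForm) (A C : BForm) :
    ⊩ (A.imp (impList l C)).imp (impList l (A.imp C)) := by
  induction l with
  | nil => exact imp_refl _
  | cons X t ih => exact imp_trans (swap_thm _ _ _) ((imp_comp X _ _).mp ih)

theorem impList_pull (l : List BForm) (A C : BForm) :
    ⊩ (impList l (A.imp C)).imp (A.imp (impList l C)) := by
  induction l with
  | nil => exact imp_refl _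
  | cons X t ih => exact imp_trans ((imp_comp X _ _).mp ih) (swap_thm _ _ _)

theorem impList_bigConj (l : List BForm) (C : BForm) :
    ⊩ (impList l C).imp ((bigConj l).imp C) := by
  induction l with
  | nil => exact pl1
  | cons A t ih =>
      have hA : ⊩ (A.imp (impList t C)).imp ((A.conj (bigConj t)).imp (impList t C)) :=
        (swap (imp_comp _ A _)).mp (conj_left A _)
      have ht : ⊩ ((A.conj (bigConj t)).imp ((bigConj t).imp C)).imp ((A.conj (bigConj t)).imp C) :=
        (swap pl2).mp (conj_right A _)
      exact imp_trans hA (imp_trans ((imp_comp _ _ _).mp ih) ht)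

theorem box_mono {A B : BForm} (i : Fin 2) (h : ⊩ A.imp B) : ⊩ (box i A).imp (box i B) :=
  (kax i).mp (nec i h)

theorem dia_mono {A B : BForm} (i : Fin 2) (h : ⊩ A.imp B) : ⊩ (dia i A).imp (dia i B) :=
  (contrapose _ _).mp (box_mono i ((contrapose A B).mp h))

theorem box_impList (i : Fin 2) (l : List BForm) (B : BForm) :
    ⊩ (box i (impList l B)).imp (impList (l.map (box i)) (box i B)) := by
  induction l with
  | nil => exact imp_refl _
  | cons A t ih => exact imp_trans_concl (kax i) ih

theorem box_dia_conj (i : Fin 2) (X Y : BForm) :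
    ⊩ (box i X).imp ((dia i Y).imp (dia i (X.conj Y))) := by
  have h : ⊩ X.imp ((X.conj Y).neg.imp Y.neg) :=
    imp_trans (conj_intro X Y) (contrapose Y (X.conj Y))
  exact imp_trans (imp_trans (box_mono i h) (kax i)) (contrapose _ _)

end BProv

section Canonical

variable {Ax : Set BForm}

def Derives (Ax S : Set BForm) (C : BForm) : Prop :=
  ∃ l : List BForm, (∀ A ∈ l, A ∈ S) ∧ BProv Ax (impList l C)

namespace Derives

variable {S : Set BForm}

theorem of_prov {C : BForm} (h : BProv Ax C) : Derives Ax S C := ⟨[], by simp, h⟩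

theorem of_mem {C : BForm} (h : C ∈ S) : Derives Ax S C :=
  ⟨[C], by simp [h], BProv.imp_refl C⟩

theorem mp {A B : BForm} (h₁ : Derives Ax S (A.imp B)) (h₂ : Derives Ax S A) :
    Derives Ax S B := by
  obtain ⟨l₁, hl₁, hp₁⟩ := h₁
  obtain ⟨l₂, hl₂, hp₂⟩ := h₂
  refine ⟨l₁ ++ l₂, fun X hX => (List.mem_append.1 hX).elim (hl₁ X) (hl₂ X), ?_⟩
  exact ((BProv.impList_mp _ A B).mp ((BProv.impList_append_left l₁ l₂ _).mp hp₁)).mp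
    ((BProv.impList_append_right l₁ l₂ _).mp hp₂)

theorem mp_prov {A B : BForm} (h : BProv Ax (A.imp B)) (hA : Derives Ax S A) :
    Derives Ax S B :=
  (of_prov h).mp hA

theorem deduction {B C : BForm} (h : Derives Ax (insert B S) C) : Derives Ax S (B.imp C) := by
  obtain ⟨l, hl, hp⟩ := h
  induction l generalizing C with
  | nil => exact of_prov (BProv.weaken hp)
  | cons A t ih =>
      have hBAC : Derives Ax S (B.imp (A.imp C)) :=
        ih (fun X hX => hl X (List.mem_cons_of_mem A hX)) ((BProv.impList_push t A _).mp hp)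
      rcases hl A List.mem_cons_self with rfl | hA
      · exact mp_prov (BProv.contract _ C) hBAC
      · exact (mp_prov (BProv.swap_thm B A C) hBAC).mp (of_mem hA)

theorem split {S₁ S₂ : Set BForm} {C : BForm} (h : Derives Ax (S₁ ∪ S₂) C) :
    ∃ l₂ : List BForm, (∀ A ∈ l₂, A ∈ S₂) ∧ Derives Ax S₁ (impList l₂ C) := by
  obtain ⟨l, hl, hp⟩ := h
  induction l generalizing C with
  | nil => exact ⟨[], by simp, of_prov hp⟩
  | cons A t ih =>
      obtain ⟨l₂, hl₂, hd⟩ := ih (fun X hX => hl X (List.mem_cons_of_mem A hX))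
        ((BProv.impList_push t A C).mp hp)
      have hA : Derives Ax S₁ (A.imp (impList l₂ C)) := mp_prov (BProv.impList_pull l₂ A C) hd
      rcases hl A List.mem_cons_self with hA₁ | hA₂
      · exact ⟨l₂, hl₂, hA.mp (of_mem hA₁)⟩
      · exact ⟨A :: l₂, List.forall_mem_cons.2 ⟨hA₂, hl₂⟩, hA⟩

end Derives

def Consistent (Ax S : Set BForm) : Prop := ¬ Derives Ax S bot

theorem Derives.neg_of_not_consistent {S : Set BForm} {B : BForm}
    (h : ¬ Consistent Ax (insert B S)) : Derives Ax S B.neg :=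
  Derives.deduction (not_not.1 h)

def MaxConsistent (Ax Γ : Set BForm) : Prop :=
  Consistent Ax Γ ∧ ∀ A : BForm, A ∈ Γ ∨ A.neg ∈ Γ

namespace MaxConsistent

variable {Γ : Set BForm} (h : MaxConsistent Ax Γ)
include h

theorem mem_of_derives {A : BForm} (hd : Derives Ax Γ A) : A ∈ Γ :=
  (h.2 A).resolve_right fun hA => h.1 ((Derives.of_mem hA).mp hd)

theorem mem_of_prov {A : BForm} (hA : BProv Ax A) : A ∈ Γ :=
  h.mem_of_derives (Derives.of_prov hA)

theorem mp_mem {A B : BForm} (hAB : A.imp B ∈ Γ) (hA : A ∈ Γ) : B ∈ Γ :=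
  h.mem_of_derives ((Derives.of_mem hAB).mp (Derives.of_mem hA))

theorem mem_of_prov_imp {A B : BForm} (hAB : BProv Ax (A.imp B)) (hA : A ∈ Γ) : B ∈ Γ :=
  h.mp_mem (h.mem_of_prov hAB) hA

theorem neg_mem_iff {A : BForm} : A.neg ∈ Γ ↔ A ∉ Γ :=
  ⟨fun hn hA => h.1 ((Derives.of_mem hn).mp (Derives.of_mem hA)), (h.2 A).resolve_left⟩

theorem imp_mem_iff {A B : BForm} : A.imp B ∈ Γ ↔ (A ∈ Γ → B ∈ Γ) := by
  refine ⟨h.mp_mem, fun hAB => ?_⟩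
  by_cases hA : A ∈ Γ
  · exact h.mem_of_prov_imp BProv.pl1 (hAB hA)
  · exact h.mem_of_prov_imp (BProv.neg_imp A B) (h.neg_mem_iff.2 hA)

theorem bot_not_mem : bot ∉ Γ := fun hb => h.1 (Derives.of_mem hb)

theorem dia_neg_of_box_not_mem {i : Fin 2} {B : BForm} (hB : box i B ∉ Γ) : dia i B.neg ∈ Γ :=
  h.neg_mem_iff.2 fun hc => hB (h.mem_of_prov_imp (BProv.box_mono i BProv.pl3) hc)

theorem box_mem_of_derives {i : Fin 2} {B : BForm} (hd : Derives Ax {C | box i C ∈ Γ} B) :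
    box i B ∈ Γ := by
  obtain ⟨l, hl, hp⟩ := hd
  refine h.mem_of_derives ⟨l.map (box i), by simpa using hl, ?_⟩
  exact (BProv.box_impList i l _).mp (BProv.nec i hp)

end MaxConsistent

theorem exists_maxConsistent_superset {S : Set BForm} (h : Consistent Ax S) :
    ∃ Γ, S ⊆ Γ ∧ MaxConsistent Ax Γ := by
  obtain ⟨Γ, hSΓ, hmax⟩ := zorn_subset_nonempty {T | S ⊆ T ∧ Consistent Ax T}
    (fun c hc hchain hne => by
      refine ⟨⋃₀ c, ⟨?_, ?_⟩, fun T hT => Set.subset_sUnion_of_mem hT⟩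
      · obtain ⟨T, hT⟩ := hne
        exact (hc hT).1.trans (Set.subset_sUnion_of_mem hT)
      · rintro ⟨l, hl, hp⟩
        obtain ⟨T, hTc, hlT⟩ := hchain.directedOn.exists_mem_subset_of_finite_of_subset_sUnion
          hne l.finite_toSet hl
        exact (hc hTc).2 ⟨l, hlT, hp⟩) S ⟨subset_rfl, h⟩
  refine ⟨Γ, hSΓ, hmax.1.2, fun A => ?_⟩
  have extend : ∀ B, Consistent Ax (insert B Γ) → B ∈ Γ := fun B hB =>
    hmax.2 ⟨hmax.1.1.trans (Set.subset_insert _ _), hB⟩ (Set.subset_insert _ _)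
      (Set.mem_insert B Γ)
  by_contra! hA
  exact hmax.1.2 ((Derives.neg_of_not_consistent (mt (extend _) hA.2)).mp
    (Derives.neg_of_not_consistent (mt (extend _) hA.1)))

theorem exists_maxConsistent_not_mem {A : BForm} (h : ¬ BProv Ax A) :
    ∃ Γ, MaxConsistent Ax Γ ∧ A ∉ Γ := by
  have hcon : Consistent Ax (insert A.neg ∅) := by
    intro hc
    obtain ⟨l, hl, hp⟩ := Derives.deduction hc
    cases l with
    | nil => exact h (BProv.pl3.mp hp)
    | cons X _ => exact hl X List.mem_cons_self
  obtain ⟨Γ, hsub, hΓ⟩ := exists_maxConsistent_superset hcon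
  exact ⟨Γ, hΓ, hΓ.neg_mem_iff.1 (hsub (Set.mem_insert _ _))⟩

def CanonicalRel (i : Fin 2) (Γ Δ : Set BForm) : Prop := ∀ B : BForm, box i B ∈ Γ → B ∈ Δ

theorem exists_canonicalRel_of_dia_mem {Γ : Set BForm} (h : MaxConsistent Ax Γ) {i : Fin 2}
    {B : BForm} (hd : dia i B ∈ Γ) :
    ∃ Δ, MaxConsistent Ax Δ ∧ CanonicalRel i Γ Δ ∧ B ∈ Δ := by
  have hcon : Consistent Ax (insert B {C | box i C ∈ Γ}) := fun hc =>
    h.neg_mem_iff.1 hd (h.box_mem_of_derives (Derives.deduction hc))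
  obtain ⟨Δ, hsub, hΔ⟩ := exists_maxConsistent_superset hcon
  exact ⟨Δ, hΔ, fun C hC => hsub (Set.mem_insert_of_mem _ hC), hsub (Set.mem_insert _ _)⟩

theorem truth_lemma {W : Type} {R : Fin 2 → W → W → Prop} {label : W → Set BForm}
    (hmcs : ∀ x, MaxConsistent Ax (label x))
    (forth : ∀ i x y, R i x y → CanonicalRel i (label x) (label y))
    (back : ∀ i x B, dia i B ∈ label x → ∃ y, R i x y ∧ B ∈ label y) (A : BForm) (x : W) :
    BSat R (fun n y => var n ∈ label y) x A ↔ A ∈ label x := by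
  induction A generalizing x with
  | var n => rfl
  | bot => exact iff_of_false id (hmcs x).bot_not_mem
  | imp A B ihA ihB =>
      rw [(hmcs x).imp_mem_iff, ← ihA, ← ihB]
      rfl
  | box i A ih =>
      refine ⟨fun hs => by_contra fun hA => ?_, fun hA y hxy => (ih y).2 (forth i x y hxy A hA)⟩
      obtain ⟨y, hxy, hy⟩ := back i x _ ((hmcs x).dia_neg_of_box_not_mem hA)
      exact (hmcs y).neg_mem_iff.1 hy ((ih y).1 (hs y hxy))

end Canonical

theorem bSat_subst {W : Type} (R : Fin 2 → W → W → Prop) (V : ℕ → W → Prop) (σ : ℕ → BForm)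
    (A : BForm) (x : W) :
    BSat R V x (A.subst σ) ↔ BSat R (fun n y => BSat R V y (σ n)) x A := by
  induction A generalizing x with
  | var n => rfl
  | bot => rfl
  | imp A B ihA ihB => simp only [BForm.subst, BSat, ihA, ihB]
  | box i A ihA => simp only [BForm.subst, BSat, ihA]

theorem mKSat_subst {W : Type} (R : W → W → Prop) (V : ℕ → W → Prop) (σ : ℕ → MForm)
    (A : MForm) (x : W) :
    MKSat R V x (A.subst σ) ↔ MKSat R (fun n y => MKSat R V y (σ n)) x A := by
  induction A generalizing x with
  | var n => rfl
  | bot => rfl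
  | imp A B ihA ihB => simp only [MForm.subst, MKSat, ihA, ihB]
  | box A ihA => simp only [MForm.subst, MKSat, ihA]

theorem bSat_toB {W : Type} (R : Fin 2 → W → W → Prop) (V : ℕ → W → Prop) (i : Fin 2)
    (A : MForm) (x : W) : BSat R V x (A.toB i) ↔ MKSat (R i) V x A := by
  induction A generalizing x with
  | var n => rfl
  | bot => rfl
  | imp A B ihA ihB => simp only [MForm.toB, BSat, MKSat, ihA, ihB]
  | box A ihA => simp only [MForm.toB, BSat, MKSat, ihA]

theorem MProv.sound {W : Type} {R : W → W → Prop} {Ax : Set MForm}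
    (hAx : ∀ B ∈ Ax, MKValid R B) {A : MForm} (h : MProv Ax A) : MKValid R A := by
  induction h with
  | axm hmem => exact hAx _ hmem
  | pl1 => exact fun V x ha _ => ha
  | pl2 => exact fun V x h₁ h₂ h₃ => h₁ h₃ (h₂ h₃)
  | pl3 => exact fun V x h => Classical.byContradiction h
  | kax => exact fun V x h₁ h₂ y hy => h₁ y hy (h₂ y hy)
  | mp _ _ ih₁ ih₂ => exact fun V x => ih₁ V x (ih₂ V x)
  | nec _ ih => exact fun V x y _ => ih V y
  | subst σ _ ih => exact fun V x => (mKSat_subst R V σ _ x).2 (ih _ x)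

theorem BProv.sound {W : Type} {R : Fin 2 → W → W → Prop} {Ax : Set BForm}
    (hAx : ∀ B ∈ Ax, BValid R B) {A : BForm} (h : BProv Ax A) : BValid R A := by
  induction h with
  | axm hmem => exact hAx _ hmem
  | pl1 => exact fun V x ha _ => ha
  | pl2 => exact fun V x h₁ h₂ h₃ => h₁ h₃ (h₂ h₃)
  | pl3 => exact fun V x h => Classical.byContradiction h
  | kax i => exact fun V x h₁ h₂ y hy => h₁ y hy (h₂ y hy)
  | mp _ _ ih₁ ih₂ => exact fun V x => ih₁ V x (ih₂ V x)
  | nec i _ ih => exact fun V x y _ => ih V y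
  | subst σ _ ih => exact fun V x => (bSat_subst R V σ _ x).2 (ih _ x)

theorem s4Ax_valid {W : Type} {R : W → W → Prop} (hrefl : ∀ x, R x x)
    (htrans : ∀ {x y z}, R x y → R y z → R x z) :
    ∀ B ∈ S4Ax, MKValid R B := by
  rintro B (rfl | rfl) V x
  · exact fun hx => hx x (hrefl x)
  · exact fun hx y hxy z hyz => hx z (htrans hxy hyz)

theorem mcKinsey_valid {W : Type} {R : W → W → Prop}
    (hfinal : ∀ x, ∃ y, R x y ∧ ∀ z, R y z → z = y) : MKValid R McKM := by
  intro V x hx hnot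
  obtain ⟨y, hxy, hy⟩ := hfinal x
  have hVy : V 0 y := by_contra fun hv => hx y hxy fun z hyz => (hy z hyz) ▸ hv
  exact hnot y hxy fun z hyz => (hy z hyz) ▸ hVy

theorem eq_of_R1'_upper {a : T22} {b : T2W} {z : W222} (h : R1' (a, some b) z) :
    z = (a, some b) := by
  induction h with
  | refl => rfl
  | tail _ hgen ih =>
      subst ih
      rcases hgen with ⟨_, _, _, heq, _⟩ | ⟨_, heq, _⟩ <;> simp at heq

theorem exists_eq_of_R2'_upper {a : T22} {b : T2W} {z : W222} (h : R2' (a, some b) z) :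
    ∃ b' : T2W, z = (a, some b') := by
  induction h with
  | refl => exact ⟨b, rfl⟩
  | tail _ hgen ih =>
      obtain ⟨b'', rfl⟩ := ih
      rcases hgen with ⟨_, _, _, heq, _⟩ | ⟨_, _, b₂, _, heq, rfl⟩
      · simp at heq
      · exact ⟨b₂, by simp_all⟩

theorem R1'_root_upper (a : T22) : R1' (a, none) (a, some []) :=
  .single (Or.inr ⟨a, rfl, rfl⟩)

theorem exists_R1'_upper (x : W222) : ∃ b : T2W, R1' x (x.1, some b) := by
  obtain ⟨a, _ | b⟩ := x
  · exact ⟨[], R1'_root_upper a⟩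
  · exact ⟨b, .refl⟩

theorem exists_R1'_final (x : W222) : ∃ y, R1' x y ∧ ∀ z, R1' y z → z = y := by
  obtain ⟨b, hb⟩ := exists_R1'_upper x
  exact ⟨_, hb, fun z hz => eq_of_R1'_upper hz⟩

theorem mkb_valid : BValid ![R1', R2'] MKB := by
  intro V x hnot
  obtain ⟨b, hb⟩ := exists_R1'_upper x
  refine hnot (x.1, some b) hb fun z hz hdia u hu => ?_
  obtain ⟨b', rfl⟩ := exists_eq_of_R2'_upper hz
  obtain rfl := eq_of_R1'_upper hu
  exact by_contra fun hv => hdia fun u' hu' => (eq_of_R1'_upper hu') ▸ hv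

def LAx : Set BForm := FusionAx ∪ {MKB}

theorem valid_of_mem_LL {A : BForm} (h : A ∈ LL) : BValid ![R1', R2'] A := by
  refine BProv.sound ?_ h
  rintro B ((⟨A, hA, rfl⟩ | ⟨A, hA, rfl⟩) | rfl) V x
  · rw [bSat_toB]
    refine MProv.sound (fun B hB => ?_) hA V x
    rcases hB with hB | rfl
    · exact s4Ax_valid (fun _ => .refl) .trans B hB
    · exact mcKinsey_valid exists_R1'_final
  · rw [bSat_toB]
    exact MProv.sound (s4Ax_valid (fun _ => .refl) .trans) hA V x
  · exact mkb_valid V x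

namespace LAx

theorem prov_S41 {A : MForm} (h : MProv (S4Ax ∪ {McKM}) A) : BProv LAx (A.toB 0) :=
  .axm (.inl (.inl ⟨A, h, rfl⟩))

theorem prov_S4 {A : MForm} (h : MProv S4Ax A) : BProv LAx (A.toB 1) :=
  .axm (.inl (.inr ⟨A, h, rfl⟩))

theorem prov_T (i : Fin 2) (A : BForm) : BProv LAx ((box i A).imp A) := by
  fin_cases i
  · exact .subst (fun _ => A) (prov_S41 (.axm (.inl (.inl rfl))))
  · exact .subst (fun _ => A) (prov_S4 (.axm (.inl rfl)))

theorem prov_four (i : Fin 2) (A : BForm) : BProv LAx ((box i A).imp (box i (box i A))) := by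
  fin_cases i
  · exact .subst (fun _ => A) (prov_S41 (.axm (.inl (.inr rfl))))
  · exact .subst (fun _ => A) (prov_S4 (.axm (.inr rfl)))

theorem prov_mcKinsey (A : BForm) : BProv LAx ((box 0 (dia 0 A)).imp (dia 0 (box 0 A))) :=
  .subst (fun _ => A) (prov_S41 (.axm (.inr rfl)))

theorem prov_imp_dia (i : Fin 2) (A : BForm) : BProv LAx (A.imp (dia i A)) :=
  BProv.imp_trans (BProv.not_not_intro A) ((BProv.contrapose _ _).mp (prov_T i A.neg))

theorem prov_dia_dia (i : Fin 2) (A : BForm) : BProv LAx ((dia i (dia i A)).imp (dia i A)) :=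
  (BProv.contrapose _ _).mp
    (BProv.imp_trans (prov_four i A.neg) (BProv.box_mono i (BProv.not_not_intro _)))

end LAx

/-- `MKB` is `◇₁ (flat p)`; every `flat B` holds in the upper layer of `𝕋₂,₂₊₂`, where `R₁′`
is the identity. -/
def BForm.flat (B : BForm) : BForm := box 1 ((dia 0 B).imp (box 0 B))

theorem LAx.prov_dia_bigConj_flat (l : List BForm) (hl : ∀ X ∈ l, X ∈ Set.range flat) :
    BProv LAx (dia 0 (bigConj l)) := by
  induction l with
  | nil => exact (prov_imp_dia 0 top).mp (BProv.imp_refl bot)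
  | cons X t ih =>
      obtain ⟨⟨B, rfl⟩, ht⟩ := List.forall_mem_cons.1 hl
      -- McKinsey turns `◇₁C` into `◇₁□₁C`, which meets `□₁◇₁(flat B)` in `◇₁◇₁(flat B ∧ C)`.
      set C := bigConj t
      have hC : BProv LAx (dia 0 (box 0 C)) := (prov_mcKinsey C).mp (.nec 0 (ih ht))
      have hB : BProv LAx (box 0 (dia 0 (flat B))) :=
        .nec 0 (.subst (A := MKB) (fun _ => B) (.axm (Or.inr rfl)))
      have hBC : BProv LAx (dia 0 ((dia 0 (flat B)).conj (box 0 C))) :=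
        ((BProv.box_dia_conj 0 _ _).mp hB).mp hC
      have hstep : BProv LAx (((dia 0 (flat B)).conj (box 0 C)).imp (dia 0 ((flat B).conj C))) :=
        BProv.imp_trans (BProv.imp_mp (BProv.imp_trans (BProv.conj_right _ _)
          (BProv.box_dia_conj 0 C (flat B))) (BProv.conj_left _ _))
          (BProv.dia_mono 0 (BProv.conj_comm C (flat B)))
      exact (prov_dia_dia 0 _).mp ((BProv.dia_mono 0 hstep).mp hBC)

def IsFlat (Δ : Set BForm) : Prop := ∀ B : BForm, flat B ∈ Δ

section LCanonical

variable {Γ Δ : Set BForm} (h : MaxConsistent LAx Γ)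
include h

theorem canonicalRel_refl (i : Fin 2) : CanonicalRel i Γ Γ :=
  fun B => h.mem_of_prov_imp (LAx.prov_T i B)

theorem canonicalRel_trans {Θ : Set BForm} {i : Fin 2} (h₁ : CanonicalRel i Γ Δ)
    (h₂ : CanonicalRel i Δ Θ) : CanonicalRel i Γ Θ :=
  fun B hB => h₂ B (h₁ _ (h.mem_of_prov_imp (LAx.prov_four i B) hB))

theorem exists_canonicalRel_isFlat : ∃ Δ, MaxConsistent LAx Δ ∧ CanonicalRel 0 Γ Δ ∧ IsFlat Δ := by
  have hcon : Consistent LAx ({C | box 0 C ∈ Γ} ∪ Set.range flat) := fun hc => by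
    obtain ⟨l, hl, hd⟩ := hc.split
    have hbox := h.box_mem_of_derives (Derives.mp_prov (BProv.impList_bigConj l bot) hd)
    exact h.neg_mem_iff.1 (h.mem_of_prov (LAx.prov_dia_bigConj_flat l hl)) hbox
  obtain ⟨Δ, hsub, hΔ⟩ := exists_maxConsistent_superset hcon
  exact ⟨Δ, hΔ, fun C hC => hsub (.inl hC), fun B => hsub (.inr ⟨B, rfl⟩)⟩

theorem IsFlat.box_mem_of_dia_mem (hf : IsFlat Γ) {B : BForm} (hd : dia 0 B ∈ Γ) :
    box 0 B ∈ Γ :=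
  h.mp_mem (h.mem_of_prov_imp (LAx.prov_T 1 _) (hf B)) hd

theorem IsFlat.of_canonicalRel (hf : IsFlat Γ) (hr : CanonicalRel 1 Γ Δ) : IsFlat Δ :=
  fun B => hr _ (h.mem_of_prov_imp (LAx.prov_four 1 _) (hf B))

end LCanonical

theorem encodeB_injective : Function.Injective encodeB := by
  intro A
  induction A with
  | var n => intro B h; cases B <;> simp_all [encodeB, Nat.pair_eq_pair]
  | bot => intro B h; cases B <;> simp_all [encodeB, Nat.pair_eq_pair]
  | imp A₁ A₂ ih₁ ih₂ =>
      intro B h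
      cases B <;> simp only [encodeB, Nat.pair_eq_pair] at h <;> try omega
      rw [ih₁ h.2.1, ih₂ h.2.2]
  | box i A ih =>
      intro B h
      cases B <;> simp only [encodeB, Nat.pair_eq_pair] at h <;> try omega
      rw [ih h.2.2, Fin.val_inj.1 h.2.1]

noncomputable def enumB (n : ℕ) : BForm := Function.invFun encodeB (Nat.unpair n).2

theorem exists_ge_enumB_eq (B : BForm) (k : ℕ) : ∃ n, k ≤ n ∧ enumB n = B :=
  ⟨Nat.pair k (encodeB B), Nat.left_le_pair k _, by
    simp only [enumB, Nat.unpair_pair, Function.leftInverse_invFun encodeB_injective B]⟩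

open Classical in
noncomputable def diaWitness (i : Fin 2) (Γ : Set BForm) (B : BForm) : Set BForm :=
  if h : MaxConsistent LAx Γ ∧ dia i B ∈ Γ then (exists_canonicalRel_of_dia_mem h.1 h.2).choose
  else Γ

open Classical in
noncomputable def flatSucc (Γ : Set BForm) : Set BForm :=
  if h : MaxConsistent LAx Γ then (exists_canonicalRel_isFlat h).choose else Γ

section Witness

variable {Γ : Set BForm} (h : MaxConsistent LAx Γ)
include h

theorem diaWitness_maxConsistent (i : Fin 2) (B : BForm) :
    MaxConsistent LAx (diaWitness i Γ B) := by
  unfold diaWitness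
  split_ifs with hc
  exacts [(exists_canonicalRel_of_dia_mem hc.1 hc.2).choose_spec.1, h]

theorem canonicalRel_diaWitness (i : Fin 2) (B : BForm) : CanonicalRel i Γ (diaWitness i Γ B) := by
  unfold diaWitness
  split_ifs with hc
  exacts [(exists_canonicalRel_of_dia_mem hc.1 hc.2).choose_spec.2.1, canonicalRel_refl h i]

theorem mem_diaWitness {i : Fin 2} {B : BForm} (hd : dia i B ∈ Γ) : B ∈ diaWitness i Γ B := by
  rw [diaWitness, dif_pos ⟨h, hd⟩]
  exact (exists_canonicalRel_of_dia_mem h hd).choose_spec.2.2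

theorem flatSucc_spec :
    MaxConsistent LAx (flatSucc Γ) ∧ CanonicalRel 0 Γ (flatSucc Γ) ∧ IsFlat (flatSucc Γ) := by
  rw [flatSucc, dif_pos h]
  exact (exists_canonicalRel_isFlat h).choose_spec

end Witness

section Unravel

variable {β : Type} [DecidableEq β] (dir : β → Fin 2) (Γ : Set BForm)

noncomputable def unravel : List (β × Fin 2) → Set BForm
  | [] => Γ
  | l :: t =>
      if l.2 = 0 then diaWitness (dir l.1) (unravel t) (enumB (t.takeWhile (· == (l.1, 1))).length)
      else unravel t

variable {dir Γ} (h : MaxConsistent LAx Γ)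
include h

theorem unravel_maxConsistent (w : List (β × Fin 2)) : MaxConsistent LAx (unravel dir Γ w) := by
  induction w with
  | nil => exact h
  | cons l t ih =>
      rw [unravel]
      split_ifs
      exacts [diaWitness_maxConsistent ih _ _, ih]

theorem canonicalRel_unravel_append {i : Fin 2} (c t : List (β × Fin 2))
    (hc : ∀ l ∈ c, dir l.1 = i) : CanonicalRel i (unravel dir Γ t) (unravel dir Γ (c ++ t)) := by
  induction c with
  | nil => exact canonicalRel_refl (unravel_maxConsistent h t) i
  | cons l c ih =>
      obtain ⟨hl, hc⟩ := List.forall_mem_cons.1 hc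
      refine canonicalRel_trans (unravel_maxConsistent h t) (ih hc) ?_
      have hmcs := unravel_maxConsistent (dir := dir) h (c ++ t)
      rw [List.cons_append, unravel]
      split_ifs
      exacts [hl ▸ canonicalRel_diaWitness hmcs _ _, canonicalRel_refl hmcs i]

omit h in
theorem unravel_replicate_append (d : β) (m : ℕ) (t : List (β × Fin 2)) :
    unravel dir Γ (List.replicate m (d, 1) ++ t) = unravel dir Γ t := by
  induction m with
  | zero => rfl
  | succ m ih => rw [List.replicate_succ, List.cons_append, unravel, if_neg (by simp), ih]

theorem exists_mem_unravel {d : β} {B : BForm} {t : List (β × Fin 2)}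
    (hd : dia (dir d) B ∈ unravel dir Γ t) :
    ∃ m, B ∈ unravel dir Γ ((d, 0) :: (List.replicate m (d, 1) ++ t)) := by
  set k := (t.takeWhile (· == (d, 1))).length
  obtain ⟨n, hkn, hn⟩ := exists_ge_enumB_eq B k
  refine ⟨n - k, ?_⟩
  have hcount : ((List.replicate (n - k) (d, 1) ++ t).takeWhile (· == (d, 1))).length = n := by
    rw [List.takeWhile_append_of_pos (by simp)]
    simp only [List.length_append, List.length_replicate]
    omega
  rw [unravel, if_pos rfl, hcount, hn, unravel_replicate_append]
  exact mem_diaWitness (unravel_maxConsistent h t) hd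

end Unravel

def letterDir (b : Bool) : Fin 2 := bif b then 1 else 0

/-- `unravel` consumes a word from its head, so the words of `T₂,₂` and `T₂` are fed to it
reversed. -/
noncomputable def label (Γ : Set BForm) : W222 → Set BForm
  | (a, none) => unravel letterDir Γ a.reverse
  | (a, some b) =>
      unravel (fun _ : Unit => 1) (flatSucc (unravel letterDir Γ a.reverse)) (b.reverse.map ((), ·))

theorem R_root_append (i : Fin 2) (a c : T22) (hc : ∀ l ∈ c, letterDir l.1 = i) :
    (![R1', R2'] : Fin 2 → W222 → W222 → Prop) i (a, none) (a ++ c, none) := by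
  fin_cases i
  all_goals
    refine .single (.inl ⟨a, a ++ c, ⟨c, fun l hl => ?_, rfl⟩, rfl, rfl⟩)
    have := hc l hl
    revert this
    cases l.1 <;> simp [letterDir]

section Labelling

variable {Γ : Set BForm} (h : MaxConsistent LAx Γ)
include h

theorem label_maxConsistent : ∀ x, MaxConsistent LAx (label Γ x)
  | (_, none) => unravel_maxConsistent h _
  | (_, some _) => unravel_maxConsistent (flatSucc_spec (unravel_maxConsistent h _)).1 _

theorem label_isFlat (a : T22) (b : T2W) : IsFlat (label Γ (a, some b)) := by
  have hΔ := flatSucc_spec (label_maxConsistent h (a, none))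
  have := canonicalRel_unravel_append hΔ.1 (dir := fun _ : Unit => 1) (i := 1)
    (b.reverse.map ((), ·)) [] (by simp)
  rw [List.append_nil] at this
  exact hΔ.2.2.of_canonicalRel hΔ.1 this

theorem canonicalRel_label_root_append {i : Fin 2} (a c : T22)
    (hc : ∀ l ∈ c, letterDir l.1 = i) :
    CanonicalRel i (label Γ (a, none)) (label Γ (a ++ c, none)) := by
  show CanonicalRel i (unravel letterDir Γ a.reverse) (unravel letterDir Γ (a ++ c).reverse)
  rw [List.reverse_append]
  exact canonicalRel_unravel_append h _ _ fun l hl => hc l (List.mem_reverse.1 hl)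

theorem canonicalRel_label_of_R1' {x y : W222} (hxy : R1' x y) :
    CanonicalRel 0 (label Γ x) (label Γ y) := by
  induction hxy with
  | refl => exact canonicalRel_refl (label_maxConsistent h _) 0
  | tail _ hgen ih =>
      refine canonicalRel_trans (label_maxConsistent h _) ih ?_
      rcases hgen with ⟨a, _, ⟨c, hc, rfl⟩, rfl, rfl⟩ | ⟨a, rfl, rfl⟩
      · exact canonicalRel_label_root_append h a c fun l hl => by simp [hc l hl, letterDir]
      · exact (flatSucc_spec (unravel_maxConsistent h _)).2.1

theorem canonicalRel_label_of_R2' {x y : W222} (hxy : R2' x y) :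
    CanonicalRel 1 (label Γ x) (label Γ y) := by
  induction hxy with
  | refl => exact canonicalRel_refl (label_maxConsistent h _) 1
  | tail _ hgen ih =>
      refine canonicalRel_trans (label_maxConsistent h _) ih ?_
      rcases hgen with ⟨a, _, ⟨c, hc, rfl⟩, rfl, rfl⟩ | ⟨a, b, _, ⟨d, rfl⟩, rfl, rfl⟩
      · exact canonicalRel_label_root_append h a c fun l hl => by simp [hc l hl, letterDir]
      · have hΔ := (flatSucc_spec (label_maxConsistent h (a, none))).1
        show CanonicalRel 1 (unravel _ _ (b.reverse.map _)) (unravel _ _ ((b ++ d).reverse.map _))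
        rw [List.reverse_append, List.map_append]
        exact canonicalRel_unravel_append hΔ _ _ fun _ _ => rfl

theorem exists_R_mem_label (i : Fin 2) (x : W222) {B : BForm} (hd : dia i B ∈ label Γ x) :
    ∃ y, (![R1', R2'] : Fin 2 → W222 → W222 → Prop) i x y ∧ B ∈ label Γ y := by
  obtain ⟨a, _ | b⟩ := x
  · set d := decide (i = 1)
    have hdir : letterDir d = i := by fin_cases i <;> rfl
    obtain ⟨m, hm⟩ := exists_mem_unravel h (d := d) (hdir ▸ hd)
    refine ⟨(a ++ (List.replicate m (d, 1) ++ [(d, 0)]), none), R_root_append i _ _ ?_, ?_⟩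
    · intro l hl
      rw [List.mem_append, List.mem_replicate, List.mem_singleton] at hl
      rcases hl with ⟨-, rfl⟩ | rfl <;> exact hdir
    · show B ∈ unravel letterDir Γ (a ++ _).reverse
      simpa using hm
  · fin_cases i
    · refine ⟨_, .refl, (label_maxConsistent h _).mem_of_prov_imp (LAx.prov_T 0 B) ?_⟩
      exact (label_isFlat h a b).box_mem_of_dia_mem (label_maxConsistent h _) hd
    · have hΔ := (flatSucc_spec (unravel_maxConsistent (dir := letterDir) h a.reverse)).1
      obtain ⟨m, hm⟩ := exists_mem_unravel hΔ (d := ()) hd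
      refine ⟨(a, some (b ++ (List.replicate m 1 ++ [0]))),
        .single (.inr ⟨a, b, _, List.prefix_append _ _, rfl, rfl⟩), ?_⟩
      show B ∈ unravel _ _ ((b ++ _).reverse.map _)
      simpa using hm

theorem bSat_label_iff (A : BForm) (x : W222) :
    BSat ![R1', R2'] (fun n y => var n ∈ label Γ y) x A ↔ A ∈ label Γ x := by
  refine truth_lemma (label_maxConsistent h) (fun i x y hxy => ?_)
    (fun i x B hd => exists_R_mem_label h i x hd) A x
  fin_cases i
  exacts [canonicalRel_label_of_R1' h hxy, canonicalRel_label_of_R2' h hxy]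

end Labelling

/-- the logic of the frame 𝕋₂,₂₊₂ equals
L = S4.1 ∗ S4 + ◇₁□₂(◇₁p → □₁p). -/
theorem log_T222_eq_LL :
    {A : BForm | BValid ![R1', R2'] A} = LL := by
  ext A
  refine ⟨fun hval => by_contra fun hA => ?_, valid_of_mem_LL⟩
  obtain ⟨Γ, hΓ, hAΓ⟩ := exists_maxConsistent_not_mem hA
  exact hAΓ ((bSat_label_iff hΓ A ([], none)).1 (hval _ _))
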